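/- arXiv:1007.0606 — 4 statements merged into one kernel-verified Lean document; each statement's English description precedes it below -/
import Mathlib

section
/- Let d = (d_1, ..., d_r) be a tuple of positive integers and N = d_1·d_2···d_r. Then the semigroup M_d = {(m_1,...,m_r) ∈ ℤ_{≥0}^r : Σ m_i d_i ≡ 0 mod N} is generated (as an additive semigroup) by the set S_d = {(m_1,...,m_r) ∈ ℤ_{≥0}^r : Σ m_i d_i = N}. -/
/-!
Removing from `m ∈ M_d` an element of `S_d` below it leaves an element of `M_d` of smaller weight
`∑ mᵢdᵢ`, so it suffices to find, in the multiset `L` of values `dᵢ` taken `mᵢ` times, whose sum is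
`kN` with `k ≥ 1`, a sub-multiset of sum exactly `N`.

If some value `c` occurs `M` times and every other value is at most `M + 1`, discard from the other
values blocks of at most `c` elements with sum divisible by `c` (pigeonhole on prefix sums mod `c`)
while their sum exceeds `N`; the gap to `N` is then a multiple of `c` of size at most `cM`, filled
with copies of `c`. Otherwise let `A` be the largest value and `P` the product of the other distinct
values: every other value occurs at most `A - 2` times and `A` at most `P - 2` times, and distinct
positive integers sum to at most their product plus one, so `∑ L < 2AP ≤ 2N`, i.e. `k = 1`.
-/

theorem List.exists_sublist_ne_nil_length_dvd_sum (l : List ℕ) (hl : l ≠ []) :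
    ∃ l', l'.Sublist l ∧ l' ≠ [] ∧ l.length ∣ l'.sum := by
  have hlen : 0 < l.length := List.length_pos_iff.2 hl
  obtain ⟨i, hi, j, hj, hij, h⟩ := Finset.exists_ne_map_eq_of_card_lt_of_maps_to
    (s := Finset.range (l.length + 1)) (t := Finset.range l.length)
    (f := fun k => (l.take k).sum % l.length) (by simp)
    (fun k _ => Finset.mem_range.2 (Nat.mod_lt _ hlen))
  wlog hlt : i < j generalizing i j
  · exact this j hj i hi hij.symm h.symm (by omega)
  simp only [Finset.mem_range] at hi hj
  refine ⟨(l.drop i).take (j - i), (List.take_sublist _ _).trans (List.drop_sublist _ _), ?_, ?_⟩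
  · simp only [ne_eq, List.take_eq_nil_iff, List.drop_eq_nil_iff]
    omega
  · have hsplit : l.take j = l.take i ++ (l.drop i).take (j - i) := by
      rw [← List.take_add, Nat.add_sub_cancel' hlt.le]
    rw [hsplit, List.sum_append] at h
    simpa using (Nat.modEq_iff_dvd' (Nat.le_add_right _ _)).1 h

namespace Finset

theorem sum_le_prod_of_two_le {s : Finset ℕ} (hs : ∀ v ∈ s, 2 ≤ v) :
    ∑ v ∈ s, v ≤ ∏ v ∈ s, v := by
  rcases s.eq_empty_or_nonempty with rfl | hne
  · simp
  induction hne using Nonempty.cons_induction with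
  | singleton a => simp
  | cons a s has hne ih =>
    obtain ⟨x, hx⟩ := hne
    have hs' : ∀ v ∈ s, 2 ≤ v := fun v hv => hs v (mem_cons_of_mem hv)
    rw [sum_cons, prod_cons]
    calc a + ∑ v ∈ s, v ≤ a + ∏ v ∈ s, v := by gcongr; exact ih hs'
      _ ≤ a * ∏ v ∈ s, v := add_le_mul (hs a (mem_cons_self a s)) <| (hs' x hx).trans <|
          single_le_prod' (f := id) (fun v hv => one_le_two.trans (hs' v hv)) hx

theorem sum_le_prod_add_one {s : Finset ℕ} (hs : 0 ∉ s) : ∑ v ∈ s, v ≤ ∏ v ∈ s, v + 1 := by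
  rw [← sum_filter_add_sum_filter_not s (2 ≤ ·), ← prod_filter_mul_prod_filter_not s (2 ≤ ·)]
  have hone : ∀ v ∈ s.filter (¬2 ≤ ·), v = 1 := fun v hv => by
    rw [mem_filter] at hv
    have : v ≠ 0 := fun h => hs (h ▸ hv.1)
    omega
  have hsum : ∑ v ∈ s.filter (¬2 ≤ ·), v ≤ 1 := by
    calc ∑ v ∈ s.filter (¬2 ≤ ·), v ≤ ∑ v ∈ {1}, v :=
          sum_le_sum_of_subset fun v hv => mem_singleton.2 (hone v hv)
      _ = 1 := sum_singleton _ _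
  rw [prod_eq_one hone, mul_one]
  exact add_le_add (sum_le_prod_of_two_le fun v hv => (mem_filter.1 hv).2) hsum

theorem prod_image_dvd_prod {ι α : Type*} [CommMonoid α] [DecidableEq α] (s : Finset ι)
    (f : ι → α) : ∏ b ∈ s.image f, b ∣ ∏ a ∈ s, f a := by
  rw [prod_comp (fun b => b) f]
  refine prod_dvd_prod_of_dvd _ _ fun b hb => dvd_pow_self b ?_
  obtain ⟨a, ha, rfl⟩ := mem_image.1 hb
  exact card_ne_zero_of_mem (mem_filter.2 ⟨ha, rfl⟩)

end Finset

namespace Multiset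

theorem exists_le_ne_zero_card_le_dvd_sum {c : ℕ} (hc : 0 < c) (R : Multiset ℕ)
    (hR : c ≤ card R) : ∃ B ≤ R, B ≠ 0 ∧ card B ≤ c ∧ c ∣ B.sum := by
  induction R using Quotient.inductionOn with | h r => ?_
  have htake : (r.take c).length = c := by simpa using hR
  obtain ⟨l, hl, hl0, hdvd⟩ := (r.take c).exists_sublist_ne_nil_length_dvd_sum
    (by rw [← List.length_pos_iff, htake]; exact hc)
  refine ⟨l, coe_le.2 (hl.trans (List.take_sublist _ _)).subperm, by simpa using hl0,
    ?_, by simpa [htake] using hdvd⟩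
  simpa [htake] using hl.length_le

theorem exists_le_sum_add_mul_eq {c M N : ℕ} (hc : 0 < c) (hcN : c ∣ N) (R : Multiset ℕ)
    (hRM : ∀ x ∈ R, x ≤ M + 1) (hcR : c ∣ R.sum) (hNR : N ≤ R.sum + M * c) :
    ∃ U ≤ R, ∃ q ≤ M, U.sum + q * c = N := by
  induction R using strongInductionOn with | _ R ih => ?_
  by_cases hRN : R.sum ≤ N
  · obtain ⟨q, hq⟩ := Nat.dvd_sub hcN hcR
    refine ⟨R, le_rfl, q, Nat.le_of_mul_le_mul_left ?_ hc, by rw [mul_comm]; omega⟩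
    rw [mul_comm c M]; omega
  by_cases hNM : N ≤ M * c
  · obtain ⟨q, rfl⟩ := hcN
    exact ⟨0, zero_le _, q, Nat.le_of_mul_le_mul_right (by rwa [mul_comm] at hNM) hc,
      by simp [mul_comm]⟩
  have hcard : c ≤ card R := by
    by_contra! hlt
    have hsum : R.sum ≤ c * (M + 1) :=
      (sum_le_card_nsmul R _ hRM).trans (by rw [smul_eq_mul]; gcongr)
    obtain ⟨q, rfl⟩ := hcN
    have : q < M + 1 := Nat.lt_of_mul_lt_mul_left (a := c) (by omega)
    have : c * q ≤ M * c := by rw [mul_comm M]; gcongr; omega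
    omega
  obtain ⟨B, hBR, hB0, hBc, hcB⟩ := exists_le_ne_zero_card_le_dvd_sum hc R hcard
  have hBsum : B.sum ≤ M * c + c :=
    (sum_le_card_nsmul B _ fun x hx => hRM x (mem_of_le hBR hx)).trans
      (by rw [smul_eq_mul, ← add_one_mul, mul_comm]; gcongr)
  have hsplit : (R - B).sum + B.sum = R.sum := by rw [← sum_add, tsub_add_cancel_of_le hBR]
  have hcRB : c ∣ (R - B).sum := (Nat.dvd_add_left hcB).1 (hsplit ▸ hcR)
  have hNRB : N ≤ (R - B).sum + M * c := by
    by_contra! hlt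
    have := Nat.eq_zero_of_dvd_of_lt (Nat.dvd_sub hcN (dvd_add hcRB (dvd_mul_left c M)))
      (by omega)
    omega
  have hRB : R - B < R := by
    refine lt_of_le_of_ne tsub_le_self fun h => hB0 ((add_eq_left (a := R)).1 ?_)
    simpa [h] using tsub_add_cancel_of_le hBR
  obtain ⟨U, hU, q, hqM, hUq⟩ := ih (R - B) hRB
    (fun x hx => hRM x (mem_of_le tsub_le_self hx)) hcRB hNRB
  exact ⟨U, hU.trans tsub_le_self, q, hqM, hUq⟩

theorem exists_forall_ne_le_count_add_one {L : Multiset ℕ} (h0 : 0 ∉ L)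
    (hL : 2 * ∏ v ∈ L.toFinset, v ≤ L.sum) : ∃ c ∈ L, ∀ x ∈ L, x ≠ c → x ≤ L.count c + 1 := by
  classical
  by_contra! h
  have hne : L.toFinset.Nonempty := by
    rcases eq_or_ne L 0 with rfl | hL0
    · simp at hL
    · exact toFinset_nonempty.2 hL0
  set F := L.toFinset
  set A := F.max' hne
  set G := F.erase A
  have hG0 : 0 ∉ G := fun h => h0 (mem_toFinset.1 (Finset.mem_of_mem_erase h))
  have hGpos : ∀ v ∈ G, 1 ≤ v := fun v hv => Nat.one_le_iff_ne_zero.2 fun h => hG0 (h ▸ hv)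
  have hcountG : ∀ v ∈ G, L.count v + 2 ≤ A := fun v hv => by
    obtain ⟨x, hx, -, hvx⟩ := h v (mem_toFinset.1 (Finset.mem_of_mem_erase hv))
    have := F.le_max' x (mem_toFinset.2 hx)
    omega
  have hcountA : L.count A + 2 ≤ ∏ v ∈ G, v := by
    obtain ⟨b, hb, hbA, hAb⟩ := h A (mem_toFinset.1 (F.max'_mem hne))
    have := Finset.single_le_prod' hGpos (Finset.mem_erase.2 ⟨hbA, mem_toFinset.2 hb⟩)
    omega
  have hsum : L.sum = L.count A * A + ∑ v ∈ G, L.count v * v := by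
    rw [Finset.sum_multiset_count, ← Finset.add_sum_erase _ _ (F.max'_mem hne)]
    rfl
  have hsumG : ∑ v ∈ G, L.count v * v + 2 * ∑ v ∈ G, v ≤ A * ∑ v ∈ G, v := by
    rw [Finset.mul_sum, Finset.mul_sum, ← Finset.sum_add_distrib]
    exact Finset.sum_le_sum fun v hv => by nlinarith [hcountG v hv]
  have hprod : A * ∏ v ∈ G, v = ∏ v ∈ F, v := Finset.mul_prod_erase F id (F.max'_mem hne)
  have hA : 1 ≤ A :=
    Nat.one_le_iff_ne_zero.2 fun hA => h0 (mem_toFinset.1 (hA ▸ F.max'_mem hne))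
  have h1 := Nat.mul_le_mul_left A hcountA
  have h2 := Nat.mul_le_mul_left A (Finset.sum_le_prod_add_one hG0)
  rw [mul_add] at h1 h2
  rw [hsum, ← hprod, mul_comm (L.count A)] at hL
  omega

theorem exists_le_sum_eq_of_forall_ne_le_count_add_one {L : Multiset ℕ} {c N : ℕ} (hc : 0 < c)
    (hcN : c ∣ N) (hcL : c ∣ L.sum) (hNL : N ≤ L.sum)
    (hL : ∀ x ∈ L, x ≠ c → x ≤ L.count c + 1) : ∃ W ≤ L, W.sum = N := by
  classical
  have hsplit : L.filter (· ≠ c) + replicate (L.count c) c = L := by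
    rw [← filter_eq', add_comm, filter_add_not]
  have hsum : L.sum = (L.filter (· ≠ c)).sum + L.count c * c := by
    rw [← smul_eq_mul, ← sum_replicate, ← sum_add, hsplit]
  obtain ⟨U, hU, q, hq, hUq⟩ := exists_le_sum_add_mul_eq hc hcN (L.filter (· ≠ c))
    (fun x hx => hL x (mem_of_mem_filter hx) (of_mem_filter (p := (· ≠ c)) hx))
    ((Nat.dvd_add_left (dvd_mul_left c _)).1 (hsum ▸ hcL)) (hsum ▸ hNL)
  refine ⟨U + replicate q c, ?_, by rw [sum_add, sum_replicate, smul_eq_mul, hUq]⟩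
  exact hsplit ▸ add_le_add hU ((replicate_le_replicate c).2 hq)

theorem exists_le_sum_eq_of_prod_toFinset_dvd {L : Multiset ℕ} {N : ℕ} (h0 : 0 ∉ L)
    (hprod : ∏ v ∈ L.toFinset, v ∣ N) (hNL : N ∣ L.sum) (hL : 0 < L.sum) :
    ∃ W ≤ L, W.sum = N := by
  obtain ⟨k, hk⟩ := hNL
  have hN : 0 < N := Nat.pos_of_ne_zero <| by rintro rfl; simp [hk] at hL
  have hk0 : k ≠ 0 := by rintro rfl; simp [hk] at hL
  obtain rfl | hk2 : k = 1 ∨ 2 ≤ k := by omega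
  · exact ⟨L, le_rfl, by rw [hk, mul_one]⟩
  have h2N : 2 * ∏ v ∈ L.toFinset, v ≤ L.sum :=
    calc 2 * ∏ v ∈ L.toFinset, v ≤ 2 * N := by gcongr; exact Nat.le_of_dvd hN hprod
      _ ≤ L.sum := by rw [hk, mul_comm]; gcongr
  obtain ⟨c, hc, hcL⟩ := exists_forall_ne_le_count_add_one h0 h2N
  have hcN : c ∣ N := (Finset.dvd_prod_of_mem id (mem_toFinset.2 hc)).trans hprod
  exact exists_le_sum_eq_of_forall_ne_le_count_add_one (Nat.pos_of_ne_zero fun h => h0 (h ▸ hc))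
    hcN (hcN.trans ⟨k, hk⟩) (by rw [hk]; exact Nat.le_mul_of_pos_right N (by omega)) hcL

theorem exists_le_map_eq_of_le_map {α β : Type*} {f : α → β} {L : Multiset α} {W : Multiset β}
    (h : W ≤ L.map f) : ∃ K ≤ L, K.map f = W := by
  induction W using Quotient.inductionOn with | h w => ?_
  induction L using Quotient.inductionOn with | h l => ?_
  obtain ⟨w', hw', hsub⟩ := coe_le.1 h
  obtain ⟨l', hl', rfl⟩ := List.sublist_map_iff.1 hsub
  exact ⟨l', coe_le.2 hl'.subperm, coe_eq_coe.2 hw'⟩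

theorem sum_map_eq_sum_count_mul {ι : Type*} [Fintype ι] [DecidableEq ι] (d : ι → ℕ)
    (K : Multiset ι) : (K.map d).sum = ∑ i, K.count i * d i := by
  induction K using Multiset.induction_on with
  | empty => simp
  | cons a K ih => simp [count_cons, add_mul, Finset.sum_add_distrib, ih, add_comm]

end Multiset

theorem exists_le_sum_mul_eq_prod {ι : Type*} [Fintype ι] {d m : ι → ℕ} (hd : ∀ i, 0 < d i)
    (hm : ∏ i, d i ∣ ∑ i, m i * d i) (hm0 : 0 < ∑ i, m i * d i) :
    ∃ s ≤ m, ∑ i, s i * d i = ∏ i, d i := by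
  classical
  set L : Multiset ι := ∑ i, m i • {i}
  have hcount (i : ι) : L.count i = m i := by
    simp [L, Multiset.count_sum', Multiset.count_singleton]
  have hsum : (L.map d).sum = ∑ i, m i * d i := by
    simp [Multiset.sum_map_eq_sum_count_mul, hcount]
  have hprod : ∏ v ∈ (L.map d).toFinset, v ∣ ∏ i, d i := by
    rw [Multiset.toFinset_map]
    exact (Finset.prod_image_dvd_prod _ d).trans
      (Finset.prod_dvd_prod_of_subset _ _ _ (Finset.subset_univ _))
  obtain ⟨W, hW, hWsum⟩ := Multiset.exists_le_sum_eq_of_prod_toFinset_dvd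
    (by simp [fun i => (hd i).ne']) hprod (hsum ▸ hm) (hsum ▸ hm0)
  obtain ⟨K, hK, rfl⟩ := Multiset.exists_le_map_eq_of_le_map hW
  exact ⟨fun i => K.count i, fun i => hcount i ▸ Multiset.count_le_of_le i hK,
    by rw [← hWsum, Multiset.sum_map_eq_sum_count_mul]⟩

/-- The semigroup `M_d = {m ∈ ℤ_{≥0}^r : Σ mᵢdᵢ ≡ 0 mod N}` (N = ∏ dᵢ) is
generated by `S_d = {m : Σ mᵢdᵢ = N}`. -/
theorem Md_generated_by_Sd (r : ℕ) (d : Fin r → ℕ) (hd : ∀ i, 0 < d i) :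
    {m : Fin r → ℕ | (∏ i, d i) ∣ ∑ i, m i * d i} ⊆
      (AddSubmonoid.closure {m : Fin r → ℕ | ∑ i, m i * d i = ∏ i, d i} : Set (Fin r → ℕ)) := by
  intro m hm
  induction h : ∑ i, m i * d i using Nat.strong_induction_on generalizing m with | _ n ih => ?_
  have hweight (s t : Fin r → ℕ) : ∑ i, (s + t) i * d i = ∑ i, s i * d i + ∑ i, t i * d i := by
    simp [add_mul, Finset.sum_add_distrib]
  rcases Nat.eq_zero_or_pos n with rfl | hn
  · have : m = 0 := funext fun i => by
      simpa [(hd i).ne'] using (Finset.sum_eq_zero_iff.1 h) i (Finset.mem_univ i)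
    exact this ▸ zero_mem _
  obtain ⟨s, hsm, hs⟩ := exists_le_sum_mul_eq_prod hd hm (h ▸ hn)
  obtain ⟨t, rfl⟩ := exists_add_of_le hsm
  rw [Set.mem_ofPred_eq, hweight, hs] at hm
  rw [hweight, hs] at h
  have hN : 0 < ∏ i, d i := Finset.prod_pos fun i _ => hd i
  exact add_mem (AddSubmonoid.subset_closure hs)
    (ih _ (by omega) ((Nat.dvd_add_right dvd_rfl).1 hm) rfl)
end

section
/- Let d_1,...,d_r be positive integers with N = ∏ d_i, and let (m_1,...,m_r) ∈ ℤ_{≥0}^r satisfy Σ m_i d_i = qN for some integer q ≥ 1. Then there exist m'_i with 0 ≤ m'_i ≤ m_i for all i and Σ m'_i d_i = N. -/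
/-!
Write `N = dᵢ Mᵢ` with `Mᵢ = ∏_{j ≠ i} dⱼ`; we show more generally that `(k + 1) N ≤ ∑ mⱼ dⱼ`
makes `k N` a subsum, by induction on the index set. Taking `x ≤ mᵢ` coins of value `dᵢ`, with
`x` a multiple of `Mᵢ / gcd(dᵢ, Mᵢ)`, makes `x dᵢ` a multiple of `Mᵢ`, and the rest of the target
is a multiple of `Mᵢ` left to the other indices. Enough value remains there unless
`gcd(dᵢ, Mᵢ) = 1` and the residue `ρᵢ = mᵢ mod Mᵢ` is nearly full, `dᵢ (Mᵢ - ρᵢ) < Mᵢ`.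
If this happens for every `i`, the `dᵢ` are pairwise coprime and `dᵢ < Mᵢ`. For the two largest
values `a, b` the piles then realise every integer of `[ab, mₐ a + m_b b - ab]`, an interval longer
than every other `dⱼ ≤ N / (ab)`, so adding the other piles one at a time extends it to
`[ab, ∑ mⱼ dⱼ - ab]`, which contains `k N`.
-/

namespace SubtupleSum

theorem exists_le_le_mul_add_mul_eq {a b m₁ m₂ t : ℕ} (ha : 0 < a) (hb : 0 < b)
    (hab : Nat.Coprime a b) (hm₁ : b ≤ m₁) (hm₂ : a ≤ m₂) (ht₁ : a * b ≤ t)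
    (ht₂ : t + a * b ≤ m₁ * a + m₂ * b) :
    ∃ x₁ ≤ m₁, ∃ x₂ ≤ m₂, x₁ * a + x₂ * b = t := by
  obtain ⟨β, hβ, hβt⟩ := Nat.exists_mul_mod_eq_of_coprime t hab.symm ha.ne'
  have hβb : β * b ≤ t := by nlinarith
  obtain ⟨c, hc⟩ : a ∣ t - β * b :=
    (Nat.modEq_iff_dvd' hβb).1 (by rw [mul_comm]; exact hβt)
  -- `x₂ = β + a u` runs through the solutions of `x₂ b ≡ t [MOD a]`; take the largest admissible
  set u := min ((m₂ - β) / a) (c / b) with hu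
  have hu₁ : a * u ≤ m₂ - β :=
    (Nat.mul_le_mul_left a (min_le_left _ _)).trans (Nat.mul_div_le _ _)
  have hu₂ : b * u ≤ c :=
    (Nat.mul_le_mul_left b (min_le_right _ _)).trans (Nat.mul_div_le _ _)
  have hx : (c - b * u) * a + (β + a * u) * b = t := by
    zify [hu₂, hβb] at hc ⊢
    linear_combination -hc
  refine ⟨c - b * u, ?_, β + a * u, by omega, hx⟩
  rcases min_choice ((m₂ - β) / a) (c / b) with h | h <;> rw [← hu] at h
  · have h1 := Nat.lt_mul_div_succ (m₂ - β) ha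
    rw [← h, mul_add_one] at h1
    by_contra! h2
    have h3 : (m₂ + 1) * b ≤ (β + a * u + a) * b := Nat.mul_le_mul_right b (by omega)
    have h4 : (m₁ + 1) * a ≤ (c - b * u) * a := Nat.mul_le_mul_right a h2
    nlinarith
  · have h1 := Nat.lt_mul_div_succ c hb
    rw [← h, mul_add_one] at h1
    omega

theorem le_mul_sub_mod_of_two_le_gcd {d M : ℕ} (m : ℕ) (hd : 0 < d) (hg : 2 ≤ d.gcd M) :
    M ≤ d * (M - m % (M / d.gcd M)) := by
  have hgd : d.gcd M ≤ d := Nat.le_of_dvd hd (Nat.gcd_dvd_left d M)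
  obtain ⟨M', hM'⟩ := Nat.gcd_dvd_right d M
  set g := d.gcd M
  rcases Nat.eq_zero_or_pos M' with rfl | hM'pos
  · simp [hM']
  rw [hM', Nat.mul_div_cancel_left _ (by omega)]
  have hρ := Nat.mod_lt m hM'pos
  have h2 : g * M' ≤ 2 * (g * M' - m % M') := by
    have := Nat.mul_le_mul_right M' hg
    omega
  exact h2.trans (Nat.mul_le_mul_right _ (by omega))

theorem exists_mul_add_mul_eq_of_le_mul_sub_mod {d M m k R : ℕ} (hd : 0 < d) (hM : 0 < M)
    (hfull : M ≤ d * (M - m % (M / d.gcd M))) (h : (k + 1) * (d * M) ≤ m * d + R) :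
    ∃ x ≤ m, ∃ k', x * d + k' * M = k * (d * M) ∧ (k' = 0 ∨ (k' + 1) * M ≤ R) := by
  set g := d.gcd M with hg
  have hgpos : 0 < g := Nat.gcd_pos_of_pos_left M hd
  obtain ⟨d', hd'⟩ := Nat.gcd_dvd_left d M
  obtain ⟨M', hM'⟩ := Nat.gcd_dvd_right d M
  rw [← hg] at hd' hM'
  rw [hM', Nat.mul_div_cancel_left _ hgpos, ← hM'] at hfull
  have hM'pos : 0 < M' := Nat.pos_of_mul_pos_left (hM'.symm ▸ hM)
  have hm := Nat.div_add_mod m M'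
  set t := m / M'
  set ρ := m % M'
  have hρ : ρ < M' := Nat.mod_lt m hM'pos
  by_cases hkt : k * g ≤ t
  · refine ⟨k * M, ?_, 0, by ring, Or.inl rfl⟩
    have := Nat.mul_le_mul_left M' hkt
    rw [hM']
    nlinarith
  · obtain ⟨e, he⟩ : ∃ e, k * g = t + e := ⟨k * g - t, by omega⟩
    refine ⟨M' * t, by omega, e * d', ?_, Or.inr ?_⟩
    · rw [hd', hM', show k * (g * d' * (g * M')) = k * g * (g * d' * M') by ring, he]
      ring
    · have hρM : ρ ≤ M := by nlinarith
      have e1 : k * (d * M) = (t + e) * d' * M := by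
        rw [← he, hd']; ring
      have e2 : m * d = t * d' * M + ρ * d := by
        rw [← hm, hd', hM']; ring
      have e3 : d * (M - ρ) + d * ρ = d * M := by
        rw [← mul_add, Nat.sub_add_cancel hρM]
      nlinarith

theorem lt_and_mul_lt_of_mul_sub_mod_lt {d M m : ℕ} (h : d * (M - m % M) < M) :
    d < M ∧ d * M < M + d * m := by
  have hM : 0 < M := by omega
  have hρ := Nat.mod_lt m hM
  constructor
  · exact (Nat.le_mul_of_pos_right d (by omega)).trans_lt h
  · have := Nat.mul_le_mul_left d (Nat.mod_le m M)
    have e : d * (M - m % M) + d * (m % M) = d * M := by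
      rw [← mul_add, Nat.sub_add_cancel hρ.le]
    omega

theorem lt_of_mul_lt_add_mul {A B C m : ℕ} (hA : 2 ≤ A) (hC : 2 ≤ C)
    (h : A * (B * C) < B * C + A * m) : B < m := by
  by_contra! hm
  have := Nat.mul_le_mul_left A hm
  obtain ⟨a, rfl⟩ := Nat.exists_eq_add_of_le' hA
  obtain ⟨c, rfl⟩ := Nat.exists_eq_add_of_le' hC
  nlinarith [Nat.zero_le (B * a * c), Nat.zero_le (B * a), Nat.zero_le (B * c)]

theorem two_mul_add_le_of_mul_lt_add_mul {A B C mA mB : ℕ} (hA : 2 ≤ A) (hB : 2 ≤ B)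
    (hC : 2 ≤ C) (hfA : A * (B * C) < B * C + A * mA) (hfB : B * (A * C) < A * C + B * mB) :
    2 * (A * B) + C ≤ mA * A + mB * B + 1 := by
  obtain ⟨a, rfl⟩ := Nat.exists_eq_add_of_le' hA
  obtain ⟨b, rfl⟩ := Nat.exists_eq_add_of_le' hB
  obtain ⟨c, rfl⟩ := Nat.exists_eq_add_of_le' hC
  nlinarith [Nat.zero_le (a * b * c), Nat.zero_le (a * b), Nat.zero_le (b * c),
    Nat.zero_le (a * c)]

variable {ι : Type*}

def subsums (d m : ι → ℕ) (s : Finset ι) : Set ℕ :=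
  {t | ∃ x : ι → ℕ, (∀ i ∈ s, x i ≤ m i) ∧ ∑ i ∈ s, x i * d i = t}

variable {d m : ι → ℕ} {s : Finset ι}

theorem zero_mem_subsums : 0 ∈ subsums d m s :=
  ⟨0, fun _ _ => Nat.zero_le _, by simp⟩

variable [DecidableEq ι]

theorem add_mem_subsums_insert {i : ι} {y t : ℕ} (hi : i ∉ s) (hy : y ≤ m i)
    (ht : t ∈ subsums d m s) : y * d i + t ∈ subsums d m (insert i s) := by
  obtain ⟨x, hx, rfl⟩ := ht
  refine ⟨Function.update x i y, fun j hj => ?_, ?_⟩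
  · rcases Finset.mem_insert.1 hj with rfl | hj
    · simpa using hy
    · simpa [Function.update_of_ne (ne_of_mem_of_not_mem hj hi)] using hx j hj
  · rw [Finset.sum_insert hi, Function.update_self]
    congr 1
    exact Finset.sum_congr rfl fun j hj => by
      rw [Function.update_of_ne (ne_of_mem_of_not_mem hj hi)]

theorem add_mem_subsums_of_mem_erase {i : ι} {y t : ℕ} (hi : i ∈ s) (hy : y ≤ m i)
    (ht : t ∈ subsums d m (s.erase i)) : y * d i + t ∈ subsums d m s := by
  simpa [Finset.insert_erase hi] using add_mem_subsums_insert (Finset.notMem_erase i s) hy ht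

theorem Icc_subset_subsums_insert {i : ι} {α β : ℕ} (hi : i ∉ s) (hα : α + d i ≤ β + 1)
    (h : Set.Icc α β ⊆ subsums d m s) :
    Set.Icc α (β + m i * d i) ⊆ subsums d m (insert i s) := by
  rintro t ⟨htα, htβ⟩
  set y := min (m i) ((t - α) / d i) with hy_def
  have hy : y * d i ≤ t - α :=
    (Nat.mul_le_mul_right _ (min_le_right _ _)).trans (Nat.div_mul_le_self _ _)
  have hrest : t - y * d i ∈ Set.Icc α β := by
    refine ⟨by omega, ?_⟩
    rcases min_choice (m i) ((t - α) / d i) with h' | h' <;> rw [← hy_def] at h'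
    · rw [h'] at hy ⊢
      omega
    · rcases (d i).eq_zero_or_pos with h0 | h0
      · simp_all
      · have := Nat.lt_div_mul_add (a := t - α) h0
        rw [← h'] at this
        omega
  have := add_mem_subsums_insert hi (min_le_left _ _ : y ≤ m i) (h hrest)
  rwa [Nat.add_sub_cancel' (hy.trans (Nat.sub_le t α))] at this

theorem Icc_subset_subsums_union {u : Finset ι} {α β : ℕ} (hsu : Disjoint s u)
    (hα : ∀ i ∈ u, α + d i ≤ β + 1) (h : Set.Icc α β ⊆ subsums d m s) :
    Set.Icc α (β + ∑ i ∈ u, m i * d i) ⊆ subsums d m (s ∪ u) := by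
  induction u using Finset.induction_on with
  | empty => simpa using h
  | insert i u hi ih =>
    rw [Finset.disjoint_insert_right] at hsu
    rw [Finset.union_insert, Finset.sum_insert hi, ← add_assoc, add_right_comm]
    refine Icc_subset_subsums_insert (i := i) (by simp [hi, hsu.1]) ?_
      (ih hsu.2 fun j hj => hα j (by simp [hj]))
    have := hα i (by simp)
    omega

theorem Icc_subset_subsums_pair {a b : ι} (hab : a ≠ b) (ha : 0 < d a) (hb : 0 < d b)
    (hcop : Nat.Coprime (d a) (d b)) (hma : d b ≤ m a) (hmb : d a ≤ m b) :
    Set.Icc (d a * d b) (m a * d a + m b * d b - d a * d b) ⊆ subsums d m {a, b} := by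
  rintro t ⟨ht₁, ht₂⟩
  have : d a * d b ≤ m a * d a := by
    rw [mul_comm (d a)]
    exact Nat.mul_le_mul_right _ hma
  obtain ⟨x₁, hx₁, x₂, hx₂, hx⟩ :=
    exists_le_le_mul_add_mul_eq ha hb hcop hma hmb ht₁ (by omega)
  refine ⟨fun j => if j = a then x₁ else x₂, ?_, ?_⟩
  · simp [hab.symm, hx₁, hx₂]
  · simp [Finset.sum_pair hab, hab.symm, hx]

theorem Icc_subset_subsums_of_coprime_pair {a b : ι} {C : ℕ} (ha : a ∈ s) (hb : b ∈ s)
    (hab : a ≠ b) (hcop : Nat.Coprime (d a) (d b)) (hA : 2 ≤ d a) (hB : 2 ≤ d b) (hC : 2 ≤ C)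
    (hle : ∀ c ∈ s \ {a, b}, d c ≤ C) (hfa : d a * (d b * C) < d b * C + d a * m a)
    (hfb : d b * (d a * C) < d a * C + d b * m b) :
    Set.Icc (d a * d b) (∑ i ∈ s, m i * d i - d a * d b) ⊆ subsums d m s := by
  have hma := lt_of_mul_lt_add_mul hA hC hfa
  have hmb := lt_of_mul_lt_add_mul hB hC (by rwa [mul_comm (d a)] at hfb)
  have hlen := two_mul_add_le_of_mul_lt_add_mul hA hB hC hfa hfb
  have hpair : {a, b} ⊆ s := Finset.insert_subset ha (Finset.singleton_subset_iff.2 hb)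
  have := Icc_subset_subsums_union (u := s \ {a, b}) Finset.disjoint_sdiff
    (fun c hc => by have := hle c hc; omega)
    (Icc_subset_subsums_pair hab (by omega) (by omega) hcop hma.le hmb.le)
  rw [Finset.union_sdiff_of_subset hpair] at this
  convert this using 2
  rw [← Finset.sum_sdiff hpair, Finset.sum_pair hab]
  have : d a * d b ≤ m a * d a := by nlinarith
  omega

theorem mul_prod_mem_subsums_of_coprime (hd : ∀ i ∈ s, 0 < d i)
    (hcop : ∀ i ∈ s, Nat.Coprime (d i) (∏ j ∈ s.erase i, d j))
    (hfull : ∀ i ∈ s,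
      d i * ((∏ j ∈ s.erase i, d j) - m i % ∏ j ∈ s.erase i, d j) < ∏ j ∈ s.erase i, d j)
    {k : ℕ} (hk : (k + 1) * ∏ i ∈ s, d i ≤ ∑ i ∈ s, m i * d i) :
    k * ∏ i ∈ s, d i ∈ subsums d m s := by
  rcases Nat.eq_zero_or_pos k with rfl | hk0
  · rw [zero_mul]
    exact zero_mem_subsums
  have hnf := fun i hi => lt_and_mul_lt_of_mul_sub_mod_lt (hfull i hi)
  have hs : s.Nonempty := by
    rw [Finset.nonempty_iff_ne_empty]
    rintro rfl
    simp at hk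
  obtain ⟨a, ha, hamax⟩ := Finset.exists_max_image s d hs
  have hsa : (s.erase a).Nonempty := by
    rw [Finset.nonempty_iff_ne_empty]
    intro h
    have := (hnf a ha).1
    rw [h, Finset.prod_empty] at this
    have := hd a ha
    omega
  obtain ⟨b, hb, hbmax⟩ := Finset.exists_max_image (s.erase a) d hsa
  have hbs := Finset.mem_of_mem_erase hb
  have hab := Finset.ne_of_mem_erase hb
  have hB : 2 ≤ d b := by
    by_contra! h
    have : ∏ j ∈ s.erase a, d j ≤ 1 :=
      Finset.prod_le_one' fun j hj => by have := hbmax j hj; omega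
    have := (hnf a ha).1
    have := hd a ha
    omega
  have hpair : {a, b} ⊆ s := Finset.insert_subset ha (Finset.singleton_subset_iff.2 hbs)
  set C := ∏ j ∈ s \ {a, b}, d j
  have hN : ∏ i ∈ s, d i = C * (d a * d b) := by
    rw [← Finset.prod_sdiff hpair, Finset.prod_pair hab.symm]
  have hMa : ∏ j ∈ s.erase a, d j = d b * C :=
    Nat.eq_of_mul_eq_mul_left (hd a ha) (by rw [Finset.mul_prod_erase s d ha, hN]; ring)
  have hMb : ∏ j ∈ s.erase b, d j = d a * C :=
    Nat.eq_of_mul_eq_mul_left (hd b hbs) (by rw [Finset.mul_prod_erase s d hbs, hN]; ring)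
  have hC : 2 ≤ C := by
    have h1 : d a < d b * C := hMa ▸ (hnf a ha).1
    have h2 := hamax b hbs
    by_contra! h
    nlinarith
  have hcopab : Nat.Coprime (d a) (d b) :=
    (hcop a ha).coprime_dvd_right (hMa ▸ dvd_mul_right _ _)
  have hle : ∀ c ∈ s \ {a, b}, d c ≤ C := fun c hc =>
    Finset.single_le_prod' (fun j hj => hd j (Finset.mem_sdiff.1 hj).1) hc
  refine Icc_subset_subsums_of_coprime_pair ha hbs hab.symm hcopab (hB.trans (hamax b hbs)) hB
    hC hle (hMa ▸ (hnf a ha).2) (hMb ▸ (hnf b hbs).2) ?_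
  rw [hN] at hk ⊢
  have hAB : d a * d b ≤ C * (d a * d b) := Nat.le_mul_of_pos_left _ (by omega)
  constructor
  · exact hAB.trans (Nat.le_mul_of_pos_left _ hk0)
  · rw [add_one_mul] at hk
    omega

theorem mul_prod_mem_subsums (s : Finset ι) (k : ℕ)
    (h : (k + 1) * ∏ i ∈ s, d i ≤ ∑ i ∈ s, m i * d i) : k * ∏ i ∈ s, d i ∈ subsums d m s := by
  induction s using Finset.strongInduction generalizing k with
  | H s ih =>
  rcases Nat.eq_zero_or_pos (∏ i ∈ s, d i) with hN | hN
  · rw [hN, mul_zero]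
    exact zero_mem_subsums
  have hd : ∀ i ∈ s, 0 < d i := fun i hi =>
    Nat.pos_of_ne_zero fun h0 => hN.ne' (Finset.prod_eq_zero hi h0)
  by_cases hred : ∃ i ∈ s, ∏ j ∈ s.erase i, d j ≤ d i *
      ((∏ j ∈ s.erase i, d j) - m i % ((∏ j ∈ s.erase i, d j) / (d i).gcd (∏ j ∈ s.erase i, d j)))
  · obtain ⟨i, hi, hfull⟩ := hred
    rw [← Finset.mul_prod_erase s d hi] at h hN ⊢
    rw [← Finset.add_sum_erase s _ hi] at h
    obtain ⟨x, hx, k', hsum, hk'⟩ :=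
      exists_mul_add_mul_eq_of_le_mul_sub_mod (hd i hi) (Nat.pos_of_mul_pos_left hN) hfull h
    rw [← hsum]
    refine add_mem_subsums_of_mem_erase hi hx ?_
    rcases hk' with rfl | hk'
    · rw [zero_mul]
      exact zero_mem_subsums
    · exact ih _ (Finset.erase_ssubset hi) k' hk'
  · push Not at hred
    have hcop : ∀ i ∈ s, Nat.Coprime (d i) (∏ j ∈ s.erase i, d j) := by
      intro i hi
      by_contra hg
      have := Nat.gcd_pos_of_pos_left (∏ j ∈ s.erase i, d j) (hd i hi)
      exact (hred i hi).not_ge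
        (le_mul_sub_mod_of_two_le_gcd _ (hd i hi) (by unfold Nat.Coprime at hg; omega))
    refine mul_prod_mem_subsums_of_coprime hd hcop (fun i hi => ?_) h
    simpa [Nat.Coprime.gcd_eq_one (hcop i hi)] using hred i hi

end SubtupleSum

theorem exists_subtuple_sum_eq_prod_general (r : ℕ) (d : Fin r → ℕ)
    (q : ℕ) (hq : 1 ≤ q) (m : Fin r → ℕ)
    (hm : ∑ i, m i * d i = q * ∏ i, d i) :
    ∃ m' : Fin r → ℕ, (∀ i, m' i ≤ m i) ∧ ∑ i, m' i * d i = ∏ i, d i := by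
  rcases hq.eq_or_lt with rfl | hq
  · exact ⟨m, fun _ => le_rfl, by rw [hm, one_mul]⟩
  obtain ⟨m', hm', hsum⟩ := SubtupleSum.mul_prod_mem_subsums (m := m) Finset.univ 1
    (by rw [hm]; exact Nat.mul_le_mul_right _ hq)
  exact ⟨m', fun i => hm' i (Finset.mem_univ i), by rw [hsum, one_mul]⟩

/-- If `Σ mᵢdᵢ = q·N` with `N = ∏ dᵢ` and `q ≥ 1`, there exist `m'ᵢ ≤ mᵢ` with
`Σ m'ᵢdᵢ = N`. -/
theorem exists_subtuple_sum_eq_prod (r : ℕ) (d : Fin r → ℕ) (hd : ∀ i, 0 < d i)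
    (q : ℕ) (hq : 1 ≤ q) (m : Fin r → ℕ)
    (hm : ∑ i, m i * d i = q * ∏ i, d i) :
    ∃ m' : Fin r → ℕ, (∀ i, m' i ≤ m i) ∧ ∑ i, m' i * d i = ∏ i, d i :=
  exists_subtuple_sum_eq_prod_general r d q hq m hm
end

section
/- Suppose a graded ℂ-algebra A = ⊕_{d≥0} A_d is generated by homogeneous elements h_1,...,h_s of degrees e_1,...,e_s, where each e_j equals some d_i from a list d_1,...,d_n of positive integers with ∏ d_i = N. Then the Veronese-type subring R = ⊕_{q≥0} A_{qN} is generated as an algebra by A_N. -/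
/-!
A monomial `∏ j, h j ^ k j` has degree `k ⬝ᵥ e`, so it suffices that every exponent vector of
degree `q * N` is a sum of `q` vectors of degree `N`; one part of degree `N` is split off at a
time. Grouping the generators by degree reduces this to weights `d` with `∏ i, d i = N`. There
we induct on `N`: every item of a kind `i₀` with `p = d i₀ > 1` is replaced by `p` items of
weight `1`, which divides the product by `p`. By induction the refined vector splits into
`q * p ≥ 2 * p - 1` parts of degree `N / p`, and Erdős–Ginzburg–Ziv selects `p` of them whose
numbers of `i₀`-items add up to a multiple of `p`: their sum undoes the refinement and has
degree `N`.
-/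

open Finset Function

section Weights

variable {ι : Type*} [Fintype ι] {d : ι → ℕ} {N : ℕ}

lemma eq_zero_of_dotProduct_eq_zero (hd : ∀ i, 0 < d i) {m : ι → ℕ} (hm : m ⬝ᵥ d = 0) :
    m = 0 := by
  funext i
  simpa [(hd i).ne'] using (Finset.sum_eq_zero_iff.mp hm) i (mem_univ i)

lemma update_dotProduct_update {α : Type*} [Mul α] [AddCommMonoid α] [DecidableEq ι]
    (u v : ι → α) (i : ι) {a b : α} (hab : a * b = u i * v i) :
    update u i a ⬝ᵥ update v i b = u ⬝ᵥ v := by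
  refine Finset.sum_congr rfl fun j _ => ?_
  rcases eq_or_ne j i with rfl | hj
  · simpa using hab
  · simp [hj]

lemma tsub_dotProduct_of_le {m k : ι → ℕ} (hk : k ≤ m) :
    (m - k) ⬝ᵥ d = m ⬝ᵥ d - k ⬝ᵥ d := by
  rw [← add_tsub_cancel_of_le hk, add_dotProduct, add_tsub_cancel_left, add_tsub_cancel_left]

lemma exists_parts_of_forall_exists_le (hd : ∀ i, 0 < d i)
    (hext : ∀ (m : ι → ℕ) (q : ℕ), 0 < q → m ⬝ᵥ d = q * N → ∃ k ≤ m, k ⬝ᵥ d = N)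
    (q : ℕ) {m : ι → ℕ} (hm : m ⬝ᵥ d = q * N) :
    ∃ parts : Fin q → ι → ℕ, ∑ t, parts t = m ∧ ∀ t, parts t ⬝ᵥ d = N := by
  induction q generalizing m with
  | zero =>
    refine ⟨finZeroElim, ?_, finZeroElim⟩
    rw [zero_mul] at hm
    simp [eq_zero_of_dotProduct_eq_zero hd hm]
  | succ q ih =>
    obtain ⟨k, hkm, hk⟩ := hext m (q + 1) q.succ_pos hm
    obtain ⟨parts, hsum, hparts⟩ := ih (m := m - k) <| by
      rw [tsub_dotProduct_of_le hkm, hm, hk, Nat.succ_mul, Nat.add_sub_cancel]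
    refine ⟨Fin.cons k parts, ?_, Fin.cases hk hparts⟩
    rw [Fin.sum_univ_succ, Fin.cons_zero]
    simp only [Fin.cons_succ, hsum, add_tsub_cancel_of_le hkm]

lemma exists_le_dotProduct_eq_of_parts_update_one [DecidableEq ι] (i₀ : ι) {M q : ℕ}
    (hq : 2 ≤ q)
    (hparts : ∀ m' : ι → ℕ, m' ⬝ᵥ update d i₀ 1 = q * d i₀ * M →
      ∃ parts : Fin (q * d i₀) → ι → ℕ, ∑ t, parts t = m' ∧ ∀ t, parts t ⬝ᵥ update d i₀ 1 = M)
    {m : ι → ℕ} (hm : m ⬝ᵥ d = q * (d i₀ * M)) :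
    ∃ k ≤ m, k ⬝ᵥ d = d i₀ * M := by
  set p := d i₀
  obtain ⟨parts, hsum, hparts⟩ := hparts (update m i₀ (p * m i₀)) <| by
    rw [update_dotProduct_update _ _ _ (by ring), hm, mul_assoc]
  obtain ⟨J, -, hJ, hpJ⟩ := Int.erdos_ginzburg_ziv (n := p) (s := univ)
    (fun t => (parts t i₀ : ℤ)) ((Nat.sub_le _ _).trans (by simpa using Nat.mul_le_mul_right p hq))
  set U := ∑ t ∈ J, parts t
  have hUm : U ≤ update m i₀ (p * m i₀) :=
    hsum ▸ sum_le_sum_of_subset_of_nonneg (subset_univ J) fun _ _ _ => bot_le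
  have hpU : p ∣ U i₀ := by
    simp only [U, Finset.sum_apply]
    exact_mod_cast hpJ
  refine ⟨update U i₀ (U i₀ / p), fun i => ?_, ?_⟩
  · rcases eq_or_ne i i₀ with rfl | hi
    · simpa using Nat.div_le_of_le_mul (by simpa using hUm i)
    · simpa [hi] using hUm i
  · have hd : d = update (update d i₀ 1) i₀ p := by simp [p]
    rw [hd, update_dotProduct_update _ _ _ (by rw [update_self, Nat.div_mul_cancel hpU, mul_one]),
      sum_dotProduct, sum_congr rfl fun t _ => hparts t, sum_const, hJ, smul_eq_mul]

lemma mul_prod_update_one [DecidableEq ι] (i : ι) : d i * ∏ j, update d i 1 j = ∏ j, d j := by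
  rw [prod_update_of_mem (mem_univ i), one_mul, sdiff_singleton_eq_erase,
    mul_prod_erase _ _ (mem_univ i)]

lemma exists_le_dotProduct_eq_one (hd : ∀ i, d i = 1) {m : ι → ℕ} (hm : m ⬝ᵥ d ≠ 0) :
    ∃ k ≤ m, k ⬝ᵥ d = 1 := by
  classical
  obtain ⟨i, hi⟩ : ∃ i, m i ≠ 0 := by
    by_contra! h
    exact hm (by simp [dotProduct, h])
  refine ⟨Pi.single i 1, fun j => ?_, by rw [single_dotProduct, hd, one_mul]⟩
  rcases eq_or_ne j i with rfl | hj
  · simpa [Nat.one_le_iff_ne_zero] using hi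
  · simp [hj]

theorem exists_le_dotProduct_eq_prod (hd : ∀ i, 0 < d i) {m : ι → ℕ} {q : ℕ} (hq : 0 < q)
    (hm : m ⬝ᵥ d = q * ∏ i, d i) : ∃ k ≤ m, k ⬝ᵥ d = ∏ i, d i := by
  classical
  induction hN : ∏ i, d i using Nat.strong_induction_on generalizing d m q with
  | _ N ih =>
  subst hN
  by_cases hone : ∀ i, d i = 1
  · simp only [hone, prod_const_one] at hm ⊢
    exact exists_le_dotProduct_eq_one hone (by omega)
  obtain ⟨i₀, hi₀⟩ := not_forall.mp hone
  have hd' : ∀ i, 0 < update d i₀ 1 i := fun i => by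
    rcases eq_or_ne i i₀ with rfl | hi <;> simp [*]
  have hN := mul_prod_update_one (d := d) i₀
  have hlt : ∏ i, update d i₀ 1 i < ∏ i, d i := by
    rw [← hN]
    exact lt_mul_left (prod_pos fun i _ => hd' i) (by have := hd i₀; omega)
  obtain rfl | hq := (Nat.succ_le_of_lt hq).eq_or_lt
  · exact ⟨m, le_rfl, by simpa using hm⟩
  rw [← hN] at hm ⊢
  exact exists_le_dotProduct_eq_of_parts_update_one i₀ hq
    (fun m' hm' => exists_parts_of_forall_exists_le hd'
      (fun m q hq hm => ih _ hlt hd' hq hm rfl) _ hm') hm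

end Weights

lemma exists_le_sum_eq_of_le_sum {κ : Type*} [DecidableEq κ] (F : Finset κ) (k : κ → ℕ) :
    ∀ {a : ℕ}, a ≤ ∑ j ∈ F, k j → ∃ k' ≤ k, ∑ j ∈ F, k' j = a
  | 0, _ => ⟨0, bot_le, by simp⟩
  | a + 1, ha => by
    obtain ⟨k', hk'k, hk'⟩ := exists_le_sum_eq_of_le_sum F k (a := a) (by omega)
    obtain ⟨j, hj, hlt⟩ := exists_lt_of_sum_lt (s := F) (f := k') (g := k) (by omega)
    refine ⟨k' + Pi.single j 1, fun i => ?_, ?_⟩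
    · rcases eq_or_ne i j with rfl | hij
      · simpa using hlt
      · simpa [hij] using hk'k i
    · simp [sum_add_distrib, hk', hj]

lemma dotProduct_comp_eq_fiberwise {κ ι : Type*} [Fintype κ] [Fintype ι] [DecidableEq ι]
    (c : κ → ι) (k : κ → ℕ) (d : ι → ℕ) :
    k ⬝ᵥ (d ∘ c) = (fun i => ∑ j with c j = i, k j) ⬝ᵥ d := by
  simp only [dotProduct, sum_mul, comp_apply]
  rw [← sum_fiberwise univ c]
  refine sum_congr rfl fun i _ => sum_congr rfl fun j hj => ?_
  rw [(mem_filter.mp hj).2]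

theorem exists_le_dotProduct_comp_eq_prod {κ ι : Type*} [Fintype κ] [Fintype ι] {d : ι → ℕ}
    (hd : ∀ i, 0 < d i) (c : κ → ι) {k : κ → ℕ} {q : ℕ} (hq : 0 < q)
    (hk : k ⬝ᵥ (d ∘ c) = q * ∏ i, d i) : ∃ k' ≤ k, k' ⬝ᵥ (d ∘ c) = ∏ i, d i := by
  classical
  rw [dotProduct_comp_eq_fiberwise] at hk
  obtain ⟨u, hu, hud⟩ := exists_le_dotProduct_eq_prod hd hq hk
  choose K hK hKu using fun i => exists_le_sum_eq_of_le_sum {j | c j = i} k (hu i)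
  refine ⟨fun j => K (c j) j, fun j => hK _ j, ?_⟩
  rw [dotProduct_comp_eq_fiberwise, ← hud]
  congr 1
  funext i
  rw [← hKu i]
  exact sum_congr rfl fun j hj => by rw [(mem_filter.mp hj).2]

theorem mem_adjoin_of_forall_exists_parts {R A κ : Type*} [CommSemiring R] [CommSemiring A]
    [Algebra R A] (𝒜 : ℕ → Submodule R A) [GradedAlgebra 𝒜] [Fintype κ] {h : κ → A}
    {e : κ → ℕ} (hmem : ∀ j, h j ∈ 𝒜 (e j)) (hgen : Algebra.adjoin R (Set.range h) = ⊤)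
    {N q : ℕ} (hparts : ∀ k : κ → ℕ, k ⬝ᵥ e = q * N →
      ∃ parts : Fin q → κ → ℕ, ∑ t, parts t = k ∧ ∀ t, parts t ⬝ᵥ e = N)
    {x : A} (hx : x ∈ 𝒜 (q * N)) : x ∈ Algebra.adjoin R (𝒜 N : Set A) := by
  have hmono : ∀ k : κ → ℕ, ∏ j, h j ^ k j ∈ 𝒜 (k ⬝ᵥ e) := fun k => by
    simpa [dotProduct] using SetLike.prod_pow_mem_graded 𝒜 e h k (F := univ) fun j _ => hmem j
  have hspan : x ∈ Submodule.span R (Submonoid.closure (Set.range h) : Set A) := by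
    rw [← Algebra.adjoin_eq_span, hgen]
    trivial
  rw [← DirectSum.decompose_of_mem_same 𝒜 hx, ← GradedAlgebra.proj_apply]
  refine (Submodule.span_le (p := (Algebra.adjoin R (𝒜 N : Set A)).toSubmodule.comap
    (GradedAlgebra.proj 𝒜 (q * N)))).mpr ?_ hspan
  rintro _ hy
  obtain ⟨k, rfl⟩ := Submonoid.mem_closure_range_iff_of_fintype.mp hy
  simp only [SetLike.mem_coe, Submodule.mem_comap, GradedAlgebra.proj_apply,
    Subalgebra.mem_toSubmodule]
  by_cases hk : k ⬝ᵥ e = q * N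
  · rw [DirectSum.decompose_of_mem_same 𝒜 (hk ▸ hmono k)]
    obtain ⟨parts, rfl, hparts⟩ := hparts k hk
    simp only [Finset.sum_apply, ← prod_pow_eq_pow_sum]
    rw [prod_comm]
    exact Subalgebra.prod_mem _ fun t _ => Algebra.subset_adjoin (hparts t ▸ hmono (parts t))
  · rw [DirectSum.decompose_of_mem_ne 𝒜 (hmono k) hk]
    exact zero_mem _

/-- Let `A = ⊕ A_d` be a graded `ℂ`-algebra generated by homogeneous elements
`h₁,…,h_s` of degrees `e₁,…,e_s`, each `e_j` lying in the list `d₁,…,dₙ` of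
positive integers with `∏ dᵢ = N`.  Then the Veronese-type subring
`R = ⊕_{q≥0} A_{qN}` is generated as an algebra by `A_N`. -/
theorem veronese_generated_in_degree_one
    (A : Type*) [CommRing A] [Algebra ℂ A]
    (𝒜 : ℕ → Submodule ℂ A) [GradedAlgebra 𝒜]
    (s n : ℕ) (h : Fin s → A) (e : Fin s → ℕ) (d : Fin n → ℕ)
    (hd : ∀ i, 0 < d i)
    (hmem : ∀ j, h j ∈ 𝒜 (e j))
    (hdeg : ∀ j, ∃ i, e j = d i)
    (hgen : Algebra.adjoin ℂ (Set.range h) = ⊤)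
    (N : ℕ) (hN : N = ∏ i, d i) :
    ∀ q : ℕ, ∀ x ∈ 𝒜 (q * N), x ∈ Algebra.adjoin ℂ (𝒜 N : Set A) := by
  choose c hc using hdeg
  obtain rfl : e = d ∘ c := funext hc
  subst hN
  intro q x hx
  refine mem_adjoin_of_forall_exists_parts 𝒜 hmem hgen (fun k hk => ?_) hx
  exact exists_parts_of_forall_exists_le (fun j => hd (c j))
    (fun k q hq hk => exists_le_dotProduct_comp_eq_prod hd c hq hk) q hk
end

section
/- Let G be a finite group of order n = |G| and U a finite-dimensional representation of G over ℂ. Via the Cayley embedding G ↪ S_n and the natural permutation representation V = ℂ^n of S_n, the G-equivariant degree-preserving algebra map η: Sym(V^k) → Sym(U) defined by x_{il} ↦ g_i(u_l) restricts to a surjection Sym(V^k)^{S_n} → Sym(U)^G, where k = dim U, {u_1,...,u_k} is a basis of U and G = {g_1,...,g_n}. -/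
open MvPolynomial

/-- The action of `h ∈ G` on `Sym(U)`, extending `h·u_l = Σ_j ρ(h)_{jl} u_j` on
the basis `u₁,…,u_k` of `U` (identifying `u_l` with the variable `X l`). -/
noncomputable def symAct (G : Type*) [Group G] (k : ℕ) (ρ : G →* GL (Fin k) ℂ)
    (h : G) (f : MvPolynomial (Fin k) ℂ) : MvPolynomial (Fin k) ℂ :=
  aeval (fun l : Fin k => ∑ j : Fin k, C ((↑(ρ h) : Matrix (Fin k) (Fin k) ℂ) j l) * X j) f

/-- Let `G = {g₁,…,gₙ}` be a finite group of order `n` and `U` a `k`-dimensional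
representation of `G` over `ℂ` with basis `u₁,…,u_k`.  Via the Cayley embedding
`G ↪ Sₙ` and the permutation representation `V = ℂⁿ` of `Sₙ`, the `G`-equivariant
degree-preserving algebra map `η : Sym(V^k) → Sym(U)`, `x_{il} ↦ gᵢ(u_l)`,
restricts to a surjection `Sym(V^k)^{Sₙ} → Sym(U)^G`. -/
theorem cayley_noether_surjective
    (G : Type*) [Group G] [Fintype G] (k : ℕ) (ρ : G →* GL (Fin k) ℂ)
    (n : ℕ) (g : Fin n ≃ G) :
    ∀ f : MvPolynomial (Fin k) ℂ, (∀ h : G, symAct G k ρ h f = f) →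
      ∃ F : MvPolynomial (Fin n × Fin k) ℂ,
        (∀ π : Equiv.Perm (Fin n), rename (fun p : Fin n × Fin k => (π p.1, p.2)) F = F) ∧
        aeval (fun p : Fin n × Fin k =>
            ∑ j : Fin k, C ((↑(ρ (g p.1)) : Matrix (Fin k) (Fin k) ℂ) j p.2) * X j) F = f := by
  intro f hf
  have hn : n ≠ 0 := by
    rintro rfl
    exact (g.symm (1 : G)).elim0
  refine ⟨C ((n : ℂ)⁻¹) * ∑ i : Fin n, rename (fun l : Fin k => (i, l)) f, ?_, ?_⟩
  · intro π
    rw [map_mul, map_sum, rename_C]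
    congr 1
    rw [← Equiv.sum_comp π (fun i => rename (fun l : Fin k => (i, l)) f)]
    refine Finset.sum_congr rfl fun i _ => ?_
    rw [rename_rename]
    rfl
  · rw [map_mul, map_sum, aeval_C]
    have : ∀ i : Fin n,
        aeval (fun p : Fin n × Fin k =>
            ∑ j : Fin k, C ((↑(ρ (g p.1)) : Matrix (Fin k) (Fin k) ℂ) j p.2) * X j)
          (rename (fun l : Fin k => (i, l)) f) = f := by
      intro i
      rw [aeval_rename]
      exact hf (g i)
    rw [Finset.sum_congr rfl fun i _ => this i, Finset.sum_const, Finset.card_univ,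
      Fintype.card_fin, nsmul_eq_mul, algebraMap_eq, ← C_eq_coe_nat, ← mul_assoc, ← C_mul,
      inv_mul_cancel₀ (by exact_mod_cast hn), C_1, one_mul]
end
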